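/- Let X : [0,∞) → ℝ be a nondecreasing continuous function with X(0) = 0, let Y(t) = t − X(t), and let z ≥ 0. Suppose Z : [0,∞) → ℝ is right-continuous, nonnegative, and satisfies Z(t) = z + Y(t) + ∫_0^t 1{Z(s) = 0} dX(s) for every t ≥ 0, where the integral is with respect to the Lebesgue–Stieltjes measure induced by X. Then for every t ≥ 0, Z(t) = z + Y(t) + max(0, −(inf_{s∈[0,t]} Y(s) + z)); in particular the integral equation has a unique nonnegative right-continuous solution. -/

import Mathlib

/-!
Write `L t = ∫_0^t 1{Z = 0} dX`, so that `Z = z + Y + L` with `L` nondecreasing. Since `Z ≥ 0`,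
`L t ≥ L s ≥ -(z + Y s)` for every `s ≤ t`, whence `L t ≥ max 0 (-(inf Y + z))`. Conversely, let
`σ` be the supremum of the zeros of `Z` in `[0, t]` and `s ≤ σ` one of them. After `s`, `L` only
grows on `(s, σ]`, by at most `X σ - X s`, and `L s = -(z + Y s)`; hence
`L t ≤ -(z + Y σ) + (σ - s) ≤ -(inf Y + z) + (σ - s)`, and letting `s ↑ σ` gives the reverse
bound. Right-continuity of `Z` is what makes the integrand measurable.
-/

open Set MeasureTheory

/-- The Stieltjes function on `ℝ` induced by a nondecreasing continuous
function `X` on `[0,∞)` (extended by the constant `X 0` to the left of `0`);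
its associated measure is the Lebesgue–Stieltjes measure induced by `X`. -/
noncomputable def stieltjesOfInflow (X : ℝ → ℝ)
    (hmono : ∀ ⦃s t : ℝ⦄, 0 ≤ s → s ≤ t → X s ≤ X t)
    (hcont : ContinuousOn X (Ici 0)) : StieltjesFunction ℝ where
  toFun x := X (max x 0)
  mono' := fun a b hab => hmono (le_max_right a 0) (max_le_max hab le_rfl)
  right_continuous' := fun x => by
    have h1 : ContinuousWithinAt X (Ici 0) (max x 0) := hcont _ (le_max_right x 0)
    have h2 : ContinuousWithinAt (fun y : ℝ => max y 0) (Ici x) x :=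
      (continuous_id.max continuous_const).continuousWithinAt
    exact ContinuousWithinAt.comp (g := X) (f := fun y : ℝ => max y 0)
      (s := Ici x) (t := Ici 0) (x := x) h1 h2 fun y _ => le_max_right y 0

open Filter Topology

theorem tendsto_ceil_mul_div_nhdsGE (x : ℝ) :
    Tendsto (fun n : ℕ => (⌈x * (n + 1)⌉ : ℝ) / (n + 1)) atTop (𝓝[≥] x) := by
  have hpos (n : ℕ) : (0 : ℝ) < n + 1 := n.cast_add_one_pos
  have hge (n : ℕ) : x ≤ (⌈x * (n + 1)⌉ : ℝ) / (n + 1) := by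
    rw [le_div_iff₀ (hpos n)]
    exact Int.le_ceil _
  have hle (n : ℕ) : (⌈x * (n + 1)⌉ : ℝ) / (n + 1) ≤ x + 1 / (n + 1) := by
    rw [div_le_iff₀ (hpos n), add_mul, one_div_mul_cancel (hpos n).ne']
    exact (Int.ceil_lt_add_one _).le
  have hlim : Tendsto (fun n : ℕ => x + 1 / ((n : ℝ) + 1)) atTop (𝓝 x) := by
    simpa using tendsto_one_div_add_atTop_nhds_zero_nat.const_add x
  exact tendsto_nhdsWithin_iff.2
    ⟨tendsto_of_tendsto_of_tendsto_of_le_of_le tendsto_const_nhds hlim hge hle,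
      Eventually.of_forall hge⟩

section RightContinuous

variable {β : Type*} [TopologicalSpace β] [TopologicalSpace.PseudoMetrizableSpace β]
  [MeasurableSpace β] [BorelSpace β] {f : ℝ → β}

theorem measurable_of_continuousWithinAt_Ici (hf : ∀ x, ContinuousWithinAt f (Ici x) x) :
    Measurable f := by
  refine measurable_of_tendsto_metrizable
    (f := fun (n : ℕ) (x : ℝ) => f ((⌈x * (n + 1)⌉ : ℝ) / (n + 1)))
    (fun n => ?_) (tendsto_pi_nhds.2 fun x => (hf x).tendsto.comp
      (tendsto_ceil_mul_div_nhdsGE x))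
  exact (measurable_of_countable fun k : ℤ => f ((k : ℝ) / (n + 1))).comp
    (Int.measurable_ceil.comp (measurable_id.mul_const _))

theorem measurable_comp_max_of_continuousWithinAt_Ici {a : ℝ}
    (hf : ∀ x, a ≤ x → ContinuousWithinAt f (Ici x) x) : Measurable fun x => f (max x a) :=
  measurable_of_continuousWithinAt_Ici fun x =>
    (hf _ (le_max_right x a)).comp (f := fun y => max y a)
      (continuous_id.max continuous_const).continuousWithinAt
      fun _ hy => max_le_max_right a (mem_Ici.1 hy)

end RightContinuous

section StieltjesOfInflow

variable {X : ℝ → ℝ} {hmono : ∀ ⦃s t : ℝ⦄, 0 ≤ s → s ≤ t → X s ≤ X t}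
  {hcont : ContinuousOn X (Ici 0)}

theorem stieltjesOfInflow_of_nonneg {x : ℝ} (hx : 0 ≤ x) :
    stieltjesOfInflow X hmono hcont x = X x :=
  congrArg X (max_eq_left hx)

theorem measureReal_stieltjesOfInflow_Ioc {s u : ℝ} (hs : 0 ≤ s) (hsu : s ≤ u) :
    (stieltjesOfInflow X hmono hcont).measure.real (Ioc s u) = X u - X s := by
  rw [measureReal_def, StieltjesFunction.measure_Ioc, stieltjesOfInflow_of_nonneg hs,
    stieltjesOfInflow_of_nonneg (hs.trans hsu), ENNReal.toReal_ofReal (sub_nonneg.2 (hmono hs hsu))]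

end StieltjesOfInflow

theorem le_of_forall_mem_le_add_csSup_sub {E : Set ℝ} (hne : E.Nonempty)
    {a b : ℝ} (h : ∀ s ∈ E, a ≤ b + (sSup E - s)) : a ≤ b := by
  refine le_of_forall_pos_lt_add fun ε hε => ?_
  obtain ⟨s, hs, hlt⟩ := exists_lt_of_lt_csSup hne (sub_lt_self (sSup E) hε)
  linarith [h s hs]

theorem measureReal_Icc_inter_le_add {μ : Measure ℝ} [IsLocallyFiniteMeasure μ] {A : Set ℝ}
    {s σ t : ℝ} (hA : ∀ u ∈ Icc 0 t ∩ A, u ≤ σ) :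
    μ.real (Icc 0 t ∩ A) ≤ μ.real (Icc 0 s ∩ A) + μ.real (Ioc s σ) := by
  have hsub : Icc 0 t ∩ A ⊆ (Icc 0 s ∩ A) ∪ Ioc s σ := fun u hu =>
    (le_or_gt u s).imp (fun h => ⟨⟨hu.1.1, h⟩, hu.2⟩) fun h => ⟨h, hA u hu⟩
  have hfin : μ ((Icc 0 s ∩ A) ∪ Ioc s σ) ≠ ⊤ :=
    measure_union_ne_top (measure_inter_lt_top_of_left_ne_top measure_Icc_lt_top.ne).ne
      measure_Ioc_lt_top.ne
  exact (measureReal_mono hsub hfin).trans (measureReal_union_le _ _)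

section Reflection

variable {X Y Z ℓ : ℝ → ℝ} {z t : ℝ}

theorem mem_lowerBounds_image_Icc_of_nonneg (hℓ : MonotoneOn ℓ (Icc 0 t))
    (hnn : ∀ u ∈ Icc 0 t, 0 ≤ z + Y u + ℓ u) : -z - ℓ t ∈ lowerBounds (Y '' Icc 0 t) := by
  rintro _ ⟨u, hu, rfl⟩
  linarith [hnn u hu, hℓ hu (right_mem_Icc.2 (hu.1.trans hu.2)) hu.2]

theorem eq_add_max_neg_sInf_of_measure {μ : Measure ℝ} [IsLocallyFiniteMeasure μ] (ht : 0 ≤ t)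
    (hY : ∀ u, Y u = u - X u)
    (hX : ∀ s u, 0 ≤ s → s ≤ u → μ.real (Ioc s u) = X u - X s)
    (hZ : ∀ u ∈ Icc 0 t, Z u = z + Y u + μ.real (Icc 0 u ∩ {v | Z v = 0}))
    (hZnn : ∀ u ∈ Icc 0 t, 0 ≤ Z u) :
    Z t = z + Y t + max 0 (-(sInf (Y '' Icc 0 t) + z)) := by
  set A := {v | Z v = 0}
  set E := Icc 0 t ∩ A
  have hℓ : Monotone fun u => μ.real (Icc 0 u ∩ A) := fun u v huv =>
    measureReal_mono (inter_subset_inter_left _ (Icc_subset_Icc_right huv))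
      (measure_inter_lt_top_of_left_ne_top measure_Icc_lt_top.ne).ne
  have hlb : -z - μ.real E ∈ lowerBounds (Y '' Icc 0 t) :=
    mem_lowerBounds_image_Icc_of_nonneg (hℓ.monotoneOn _) fun u hu => hZ u hu ▸ hZnn u hu
  have hlow : max 0 (-(sInf (Y '' Icc 0 t) + z)) ≤ μ.real E :=
    max_le measureReal_nonneg (by linarith [le_csInf ((nonempty_Icc.2 ht).image Y) hlb])
  suffices μ.real E ≤ max 0 (-(sInf (Y '' Icc 0 t) + z)) by
    rw [hZ t (right_mem_Icc.2 ht), le_antisymm this hlow]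
  rcases E.eq_empty_or_nonempty with hE | hE
  · simp [hE]
  have hbdd : BddAbove E := bddAbove_Icc.mono inter_subset_left
  have hσ : sSup E ∈ Icc 0 t :=
    ⟨hE.some_mem.1.1.trans (le_csSup hbdd hE.some_mem), csSup_le hE fun u hu => hu.1.2⟩
  refine le_max_of_le_right (le_of_forall_mem_le_add_csSup_sub hE fun s hs => ?_)
  -- On `(s, t]` the set `A` lies in `(s, sup E]`, which has mass `X (sup E) - X s`.
  have hgrowth : μ.real E ≤ μ.real (Icc 0 s ∩ A) + (X (sSup E) - X s) := by
    rw [← hX s (sSup E) hs.1.1 (le_csSup hbdd hs)]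
    exact measureReal_Icc_inter_le_add fun u hu => le_csSup hbdd hu
  have hzero : μ.real (Icc 0 s ∩ A) = -z - Y s := by
    linarith [hZ s hs.1, show Z s = 0 from hs.2]
  have hinf : sInf (Y '' Icc 0 t) ≤ Y (sSup E) := csInf_le ⟨_, hlb⟩ (mem_image_of_mem Y hσ)
  linarith [hY s, hY (sSup E)]

end Reflection

theorem stmt_7_general (X : ℝ → ℝ)
    (hmono : ∀ ⦃s t : ℝ⦄, 0 ≤ s → s ≤ t → X s ≤ X t)
    (hcont : ContinuousOn X (Ici 0))
    (Y : ℝ → ℝ) (hY : ∀ t, Y t = t - X t)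
    (z : ℝ)
    (Z : ℝ → ℝ)
    (hZrc : ∀ t : ℝ, 0 ≤ t → ContinuousWithinAt Z (Ici t) t)
    (hZnn : ∀ t : ℝ, 0 ≤ t → 0 ≤ Z t)
    (hZeq : ∀ t : ℝ, 0 ≤ t →
      Z t = z + Y t +
        ∫ s in Icc (0 : ℝ) t, ({s : ℝ | Z s = 0}).indicator (fun _ => (1 : ℝ)) s
          ∂(stieltjesOfInflow X hmono hcont).measure) :
    ∀ t : ℝ, 0 ≤ t → Z t = z + Y t + max 0 (-(sInf (Y '' Icc 0 t) + z)) := by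
  intro t ht
  set W := fun s => Z (max s 0)
  have hWZ {u : ℝ} (hu : 0 ≤ u) : W u = Z u := congrArg Z (max_eq_left hu)
  have hW : MeasurableSet {v | W v = 0} :=
    measurableSet_eq_fun (measurable_comp_max_of_continuousWithinAt_Ici hZrc) measurable_const
  have hint (u : ℝ) :
      ∫ s in Icc (0 : ℝ) u, ({s : ℝ | Z s = 0}).indicator (fun _ => (1 : ℝ)) s
        ∂(stieltjesOfInflow X hmono hcont).measure =
      (stieltjesOfInflow X hmono hcont).measure.real (Icc 0 u ∩ {v | W v = 0}) := by
    rw [setIntegral_congr_fun measurableSet_Icc (g := {v | W v = 0}.indicator 1) fun s hs => by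
      simp only [indicator_apply, mem_ofPred_eq, hWZ hs.1]; rfl, integral_indicator_one hW,
      measureReal_restrict_apply hW, inter_comm]
  rw [← hWZ ht]
  exact eq_add_max_neg_sInf_of_measure ht hY
    (fun s u hs hsu => measureReal_stieltjesOfInflow_Ioc hs hsu)
    (fun u hu => by rw [hWZ hu.1, hZeq u hu.1, hint]) fun u hu => hWZ hu.1 ▸ hZnn u hu.1

/-- uniqueness part of Proposition 2, pathwise form.
Any nonnegative right-continuous solution of the inventory integral equation
`Z t = z + Y t + ∫_0^t 1{Z s = 0} dX s` (Lebesgue–Stieltjes integral with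
respect to the nondecreasing continuous outflow `X` with `X 0 = 0`), where
`Y t = t - X t` and `z ≥ 0`, is given by the reflection formula. -/
theorem stmt_7 (X : ℝ → ℝ)
    (hmono : ∀ ⦃s t : ℝ⦄, 0 ≤ s → s ≤ t → X s ≤ X t)
    (hcont : ContinuousOn X (Ici 0))
    (hX0 : X 0 = 0)
    (Y : ℝ → ℝ) (hY : ∀ t, Y t = t - X t)
    (z : ℝ) (hz : 0 ≤ z)
    (Z : ℝ → ℝ)
    (hZrc : ∀ t : ℝ, 0 ≤ t → ContinuousWithinAt Z (Ici t) t)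
    (hZnn : ∀ t : ℝ, 0 ≤ t → 0 ≤ Z t)
    (hZeq : ∀ t : ℝ, 0 ≤ t →
      Z t = z + Y t +
        ∫ s in Icc (0 : ℝ) t, ({s : ℝ | Z s = 0}).indicator (fun _ => (1 : ℝ)) s
          ∂(stieltjesOfInflow X hmono hcont).measure) :
    ∀ t : ℝ, 0 ≤ t → Z t = z + Y t + max 0 (-(sInf (Y '' Icc 0 t) + z)) :=
  stmt_7_general X hmono hcont Y hY z Z hZrc hZnn hZeq
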